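/- Let b : ℝ^d → ℝ^d and σ : ℝ^d → ℝ^{d×d} be globally Lipschitz with constant L and satisfy |b(0)| + |σ(0)| ≤ L, and suppose σ(x) is invertible for every x ∈ ℝ^d. Fix θ ∈ [0,1], T > 0, and for N ∈ ℕ⁺ set h = T/N, t_n = nh; for t ∈ [0,T] let t̂ be the largest grid point t_n ≤ t and ť the smallest grid point t_n ≥ t. Define B_h(φ) = (1/2)∫₀^T |σ(φ(t̂))^{-1}(φ'(t) − b((1−θ)φ(t̂) + θφ(ť)))|² dt for φ ∈ H¹_{x₀}(0,T;ℝ^d). Then there exists a constant C₀ > 0, depending only on x₀, T and L (in particular independent of h), such that ‖φ‖_{H¹} ≤ C₀ e^{C₀ B_h(φ)} for every φ ∈ H¹_{x₀}(0,T;ℝ^d) and every h ∈ (0, 1/(2L)]. -/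

import Mathlib

open MeasureTheory Set

/-- Largest grid point `t_n = n h` below `t`. -/
noncomputable def gridHat (h t : ℝ) : ℝ := h * ⌊t / h⌋

/-- Smallest grid point `t_n = n h` above `t`. -/
noncomputable def gridCheck (h t : ℝ) : ℝ := h * ⌈t / h⌉

/-!
Write `φ' = b(θ-point) + σ(φ(t̂)) ψ`, so that `B_h(φ) = ½ ∫₀ᵀ ‖ψ‖²`. By the linear growth of `b`
and `σ`, on a grid cell `[t_n, t_{n+1})` one has
`‖φ'‖ ≤ L (1 + ‖φ(t_n)‖) ‖ψ‖ + L (1 + max_{[0, t_{n+1}]} ‖φ‖)`, so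
`u_n = 1 + ‖x₀‖ + ∫₀^{t_n} ‖φ'‖` obeys the implicit recursion
`(1 - L h) u_{n+1} ≤ (1 + L ∫_{cell} ‖ψ‖) u_n`. As `L h ≤ 1/2`, discrete Grönwall gives
`u_N ≤ (1 + ‖x₀‖) exp (2 L ∫₀ᵀ ‖ψ‖ + 2 L T)`, and `∫₀ᵀ ‖ψ‖ ≤ B_h(φ) + T/2`. With this uniform
bound on `φ` the pointwise estimate gives `‖φ'‖² ≤ 2 (L u_N)² (‖ψ‖² + 1)`; integrating and using
`√x ≤ exp (x / 2)` yields the claim.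
-/

section Grid

variable {h t : ℝ}

theorem gridHat_le (hh : 0 < h) (t : ℝ) : gridHat h t ≤ t := by
  rw [gridHat, mul_comm, ← le_div_iff₀ hh]
  exact Int.floor_le _

theorem gridHat_nonneg (hh : 0 ≤ h) (ht : 0 ≤ t) : 0 ≤ gridHat h t :=
  mul_nonneg hh (Int.cast_nonneg (Int.floor_nonneg.2 (div_nonneg ht hh)))

theorem le_gridCheck (hh : 0 < h) (t : ℝ) : t ≤ gridCheck h t := by
  rw [gridCheck, mul_comm, ← div_le_iff₀ hh]
  exact Int.le_ceil _

theorem gridCheck_le (hh : 0 < h) {n : ℕ} (ht : t ≤ n * h) : gridCheck h t ≤ n * h := by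
  rw [gridCheck, mul_comm]
  gcongr
  exact_mod_cast Int.ceil_le.2 (by exact_mod_cast (div_le_iff₀ hh).2 ht)

theorem gridHat_eq_of_mem_Ico (hh : 0 < h) {n : ℕ} (ht : t ∈ Ico (n * h) ((n + 1) * h)) :
    gridHat h t = n * h := by
  have : ⌊t / h⌋ = n := Int.floor_eq_iff.2 (by
    push_cast
    exact ⟨(le_div_iff₀ hh).2 ht.1, (div_lt_iff₀ hh).2 ht.2⟩)
  rw [gridHat, mul_comm, this, Int.cast_natCast]

theorem exists_gridHat_eq_of_mem_Icc (hh : 0 < h) {N : ℕ} (ht : t ∈ Icc 0 (N * h)) :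
    ∃ k ∈ Finset.range (N + 1), gridHat h t = k * h := by
  have hfloor : 0 ≤ ⌊t / h⌋ := Int.floor_nonneg.2 (div_nonneg ht.1 hh.le)
  refine ⟨⌊t / h⌋.toNat, Finset.mem_range_succ_iff.2 ?_, ?_⟩
  · rw [Int.toNat_le, Int.floor_le_iff, div_lt_iff₀ hh]
    push_cast
    linarith [ht.2]
  · rw [gridHat, mul_comm, ← Int.cast_natCast, Int.toNat_of_nonneg hfloor]

theorem stronglyMeasurable_comp_grid {X : Type*} [TopologicalSpace X] (f : ℝ → ℝ → X)
    (h : ℝ) : StronglyMeasurable fun t => f (gridHat h t) (gridCheck h t) :=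
  (StronglyMeasurable.of_discrete (f := fun n : ℤ × ℤ => f (h * n.1) (h * n.2))).comp_measurable
    ((measurable_id.div_const h).floor.prodMk (measurable_id.div_const h).ceil)

end Grid

theorem MeasureTheory.IntegrableOn.intervalIntegrable_of_le {E : Type*} [NormedAddCommGroup E]
    {f : ℝ → E} {a b c d : ℝ} (hf : IntegrableOn f (Icc a b)) (hac : a ≤ c) (hcd : c ≤ d)
    (hdb : d ≤ b) : IntervalIntegrable f volume c d :=
  (hf.mono_set (uIcc_subset_Icc ⟨hac, hcd.trans hdb⟩ ⟨hac.trans hcd, hdb⟩)).intervalIntegrable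

theorem intervalIntegral.integral_le_integral_sq_add_div_two {f : ℝ → ℝ} {a b : ℝ}
    (hab : a ≤ b) (hf : IntervalIntegrable f volume a b)
    (hf₂ : IntervalIntegrable (fun t => f t ^ 2) volume a b) :
    ∫ t in a..b, f t ≤ ((∫ t in a..b, f t ^ 2) + (b - a)) / 2 :=
  calc ∫ t in a..b, f t ≤ ∫ t in a..b, (f t ^ 2 + 1) / 2 :=
        integral_mono_on hab hf ((hf₂.add intervalIntegrable_const).div_const 2)
          fun t _ => by nlinarith [sq_nonneg (f t - 1)]
    _ = ((∫ t in a..b, f t ^ 2) + (b - a)) / 2 := by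
        rw [integral_div, integral_add hf₂ intervalIntegrable_const, integral_const, smul_eq_mul,
          mul_one]

theorem LipschitzWith.norm_le_mul_one_add_norm {E F : Type*} [SeminormedAddCommGroup E]
    [SeminormedAddCommGroup F] {L : NNReal} {f : E → F} (hf : LipschitzWith L f)
    (h0 : ‖f 0‖ ≤ L) (x : E) : ‖f x‖ ≤ L * (1 + ‖x‖) := by
  have := hf.norm_sub_le x 0
  rw [sub_zero] at this
  calc ‖f x‖ ≤ ‖f x - f 0‖ + ‖f 0‖ := norm_le_norm_sub_add _ _
    _ ≤ L * ‖x‖ + L := add_le_add this h0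
    _ = L * (1 + ‖x‖) := by ring

theorem ContinuousLinearMap.norm_le_of_isUnit {𝕜 E : Type*} [NontriviallyNormedField 𝕜]
    [NormedAddCommGroup E] [NormedSpace 𝕜 E] {A : E →L[𝕜] E} (hA : IsUnit A) (v w : E) :
    ‖v‖ ≤ ‖A‖ * ‖Ring.inverse A (v - w)‖ + ‖w‖ := by
  have hv : v = (A * Ring.inverse A) (v - w) + w := by
    rw [Ring.mul_inverse_cancel A hA]
    simp
  calc ‖v‖ = ‖A (Ring.inverse A (v - w)) + w‖ := congrArg norm hv
    _ ≤ ‖A (Ring.inverse A (v - w))‖ + ‖w‖ := norm_add_le _ _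
    _ ≤ _ := by gcongr; exact A.le_opNorm _

theorem norm_one_sub_smul_add_smul_le {E : Type*} [SeminormedAddCommGroup E] [NormedSpace ℝ E]
    {x y : E} {θ M : ℝ} (hθ₀ : 0 ≤ θ) (hθ₁ : θ ≤ 1) (hx : ‖x‖ ≤ M) (hy : ‖y‖ ≤ M) :
    ‖(1 - θ) • x + θ • y‖ ≤ M := by
  simpa using convex_closedBall (0 : E) M (by simpa using hx) (by simpa using hy)
    (sub_nonneg.2 hθ₁) hθ₀ (by ring)

/-- One implicit Euler-type step: `1 / (1 - c) ≤ 1 + 2 c` for `0 ≤ c ≤ 1/2`. -/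
theorem le_one_add_mul_of_le_add_mul_self {a c v w : ℝ} (ha : 0 ≤ a) (hc₀ : 0 ≤ c)
    (hc : c ≤ 1 / 2) (hv : 0 ≤ v) (hw : 0 ≤ w) (h : v ≤ (1 + a) * w + c * v) :
    v ≤ (1 + (2 * a + 2 * c)) * w := by
  nlinarith [mul_nonneg (mul_nonneg hc₀ (by linarith : 0 ≤ 1 - 2 * c)) hv,
    mul_nonneg (mul_nonneg ha hw) (by linarith : 0 ≤ 1 - 2 * c)]

theorem le_mul_exp_sum_of_le_one_add_mul {u c : ℕ → ℝ} {N : ℕ} (hu₀ : 0 ≤ u 0)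
    (hc : ∀ n < N, 0 ≤ c n) (hu : ∀ n < N, u (n + 1) ≤ (1 + c n) * u n) :
    u N ≤ u 0 * Real.exp (∑ n ∈ Finset.range N, c n) := by
  -- freeze `u` and switch `c` off after time `N`, so that `discrete_gronwall` applies
  have := discrete_gronwall (u := fun n => u (min n N)) (b := 0)
    (c := fun n => if n < N then c n else 0) (n₀ := 0) (by simpa using hu₀) ?_ ?_ (by simp)
    (Nat.zero_le N)
  · have hsum : ∑ n ∈ Finset.range N, (if n < N then c n else 0) = ∑ n ∈ Finset.range N, c n :=
      Finset.sum_congr rfl fun n hn => if_pos (Finset.mem_range.1 hn)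
    simpa [hsum] using this
  · intro n _
    by_cases hn : n < N
    · simpa [hn, Nat.min_eq_left hn.le, Nat.min_eq_left (Nat.succ_le_of_lt hn)] using hu n hn
    · have hNn := not_lt.1 hn
      simp [hn, Nat.min_eq_right hNn, Nat.min_eq_right (Nat.le_succ_of_le hNn)]
  · intro n _
    split_ifs with hn
    · exact hc n hn
    · exact le_rfl

theorem Real.sqrt_le_exp_half {x : ℝ} (hx : 0 ≤ x) : √x ≤ Real.exp (x / 2) := by
  nlinarith [Real.sq_sqrt hx, sq_nonneg (√x - 1), Real.add_one_le_exp (x / 2)]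

section ThetaMethod

variable {E : Type*} [NormedAddCommGroup E] [NormedSpace ℝ E]
  {b : E → E} {σ : E → E →L[ℝ] E} {L : NNReal} {θ h T : ℝ} {x₀ : E} {φ φ' : ℝ → E}

noncomputable def thetaPoint (θ h : ℝ) (φ : ℝ → E) (t : ℝ) : E :=
  (1 - θ) • φ (gridHat h t) + θ • φ (gridCheck h t)

/-- The control `ψ` with `φ' = b (thetaPoint θ h φ) + σ (φ t̂) ψ`; `B_h(φ) = ½ ∫₀ᵀ ‖ψ‖²`. -/
noncomputable def thetaControl (b : E → E) (σ : E → E →L[ℝ] E) (θ h : ℝ) (φ φ' : ℝ → E)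
    (t : ℝ) : E :=
  Ring.inverse (σ (φ (gridHat h t))) (φ' t - b (thetaPoint θ h φ t))

theorem norm_le_of_thetaControl (hb : ∀ x, ‖b x‖ ≤ L * (1 + ‖x‖))
    (hσ : ∀ x, ‖σ x‖ ≤ L * (1 + ‖x‖)) (hσu : ∀ x, IsUnit (σ x)) {t M M' : ℝ}
    (hM : ‖φ (gridHat h t)‖ ≤ M) (hM' : ‖thetaPoint θ h φ t‖ ≤ M') :
    ‖φ' t‖ ≤ L * (1 + M) * ‖thetaControl b σ θ h φ φ' t‖ + L * (1 + M') :=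
  calc ‖φ' t‖ ≤ ‖σ (φ (gridHat h t))‖ * ‖thetaControl b σ θ h φ φ' t‖
        + ‖b (thetaPoint θ h φ t)‖ :=
      ContinuousLinearMap.norm_le_of_isUnit (hσu _) _ _
    _ ≤ L * (1 + M) * ‖thetaControl b σ θ h φ φ' t‖ + L * (1 + M') := by
      gcongr
      · exact (hσ _).trans (by gcongr)
      · exact (hb _).trans (by gcongr)

theorem norm_le_add_integral_norm (hφ' : IntegrableOn φ' (Icc 0 T))
    (hφ : ∀ t ∈ Icc 0 T, φ t = x₀ + ∫ s in (0 : ℝ)..t, φ' s) {t r : ℝ} (ht : 0 ≤ t)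
    (htr : t ≤ r) (hrT : r ≤ T) : ‖φ t‖ ≤ ‖x₀‖ + ∫ s in (0 : ℝ)..r, ‖φ' s‖ := by
  rw [hφ t ⟨ht, htr.trans hrT⟩]
  refine (norm_add_le _ _).trans (add_le_add le_rfl ?_)
  refine (intervalIntegral.norm_integral_le_integral_norm ht).trans ?_
  refine intervalIntegral.integral_mono_interval le_rfl ht htr
    (Filter.Eventually.of_forall fun _ => norm_nonneg _) ?_
  exact IntegrableOn.intervalIntegrable_of_le hφ'.norm le_rfl (ht.trans htr) hrT

theorem norm_thetaPoint_le (hθ₀ : 0 ≤ θ) (hθ₁ : θ ≤ 1) (hh : 0 < h)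
    (hφ' : IntegrableOn φ' (Icc 0 T)) (hφ : ∀ t ∈ Icc 0 T, φ t = x₀ + ∫ s in (0 : ℝ)..t, φ' s)
    {t r : ℝ} (ht : 0 ≤ t) (hr : gridCheck h t ≤ r) (hrT : r ≤ T) :
    ‖thetaPoint θ h φ t‖ ≤ ‖x₀‖ + ∫ s in (0 : ℝ)..r, ‖φ' s‖ := by
  have hcheck : 0 ≤ gridCheck h t := ht.trans (le_gridCheck hh t)
  refine norm_one_sub_smul_add_smul_le hθ₀ hθ₁ ?_
    (norm_le_add_integral_norm hφ' hφ hcheck hr hrT)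
  exact norm_le_add_integral_norm hφ' hφ (gridHat_nonneg hh.le ht)
    ((gridHat_le hh t).trans ((le_gridCheck hh t).trans hr)) hrT

theorem memLp_thetaControl (hb : ∀ x, ‖b x‖ ≤ L * (1 + ‖x‖)) (hθ₀ : 0 ≤ θ) (hθ₁ : θ ≤ 1)
    (hh : 0 < h) {N : ℕ} (hNh : N * h = T) (hφ' : IntegrableOn φ' (Icc 0 T))
    (hφ'₂ : IntegrableOn (fun t => ‖φ' t‖ ^ 2) (Icc 0 T))
    (hφ : ∀ t ∈ Icc 0 T, φ t = x₀ + ∫ s in (0 : ℝ)..t, φ' s) :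
    MemLp (thetaControl b σ θ h φ φ') 2 (volume.restrict (Icc 0 T)) := by
  set M := ‖x₀‖ + ∫ s in (0 : ℝ)..T, ‖φ' s‖
  set K := ∑ k ∈ Finset.range (N + 1), ‖Ring.inverse (σ (φ (k * h)))‖
  have hmeas : AEStronglyMeasurable (thetaControl b σ θ h φ φ') (volume.restrict (Icc 0 T)) :=
    (ContinuousLinearMap.id ℝ (E →L[ℝ] E)).aestronglyMeasurable_comp₂
      (stronglyMeasurable_comp_grid (fun x _ => Ring.inverse (σ (φ x))) h).aestronglyMeasurable
      (hφ'.aestronglyMeasurable.sub (stronglyMeasurable_comp_grid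
        (fun x y => b ((1 - θ) • φ x + θ • φ y)) h).aestronglyMeasurable)
  have hφ'L2 : MemLp (fun t => ‖φ' t‖ + L * (1 + M)) 2 (volume.restrict (Icc 0 T)) :=
    ((memLp_two_iff_integrable_sq_norm hφ'.aestronglyMeasurable).2 hφ'₂).norm.add
      (memLp_const _)
  refine hφ'L2.of_le_mul (c := K) hmeas
    ((ae_restrict_mem measurableSet_Icc).mono fun t ht => ?_)
  -- `t̂` takes finitely many values on `[0, T]`, so the finite sum `K` bounds the inverses
  obtain ⟨k, hk, hkt⟩ := exists_gridHat_eq_of_mem_Icc hh (hNh ▸ ht)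
  have hK : ‖Ring.inverse (σ (φ (gridHat h t)))‖ ≤ K :=
    hkt ▸ Finset.single_le_sum (f := fun k : ℕ => ‖Ring.inverse (σ (φ (k * h)))‖)
      (fun _ _ => norm_nonneg _) hk
  have hB : ‖b (thetaPoint θ h φ t)‖ ≤ L * (1 + M) :=
    (hb _).trans (by
      gcongr
      exact norm_thetaPoint_le hθ₀ hθ₁ hh hφ' hφ ht.1
        (hNh ▸ gridCheck_le hh (hNh ▸ ht.2)) le_rfl)
  calc ‖thetaControl b σ θ h φ φ' t‖
      ≤ ‖Ring.inverse (σ (φ (gridHat h t)))‖ * ‖φ' t - b (thetaPoint θ h φ t)‖ :=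
        ContinuousLinearMap.le_opNorm _ _
    _ ≤ K * (‖φ' t‖ + L * (1 + M)) := by
        gcongr
        exact (norm_sub_le _ _).trans (add_le_add le_rfl hB)
    _ ≤ K * ‖‖φ' t‖ + L * (1 + M)‖ :=
        mul_le_mul_of_nonneg_left (Real.le_norm_self _)
          (Finset.sum_nonneg fun _ _ => norm_nonneg _)

theorem integral_norm_le_on_cell (hb : ∀ x, ‖b x‖ ≤ L * (1 + ‖x‖))
    (hσ : ∀ x, ‖σ x‖ ≤ L * (1 + ‖x‖)) (hσu : ∀ x, IsUnit (σ x)) (hθ₀ : 0 ≤ θ) (hθ₁ : θ ≤ 1)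
    (hh : 0 < h) (hφ' : IntegrableOn φ' (Icc 0 T))
    (hφ : ∀ t ∈ Icc 0 T, φ t = x₀ + ∫ s in (0 : ℝ)..t, φ' s)
    (hψ : IntegrableOn (fun t => ‖thetaControl b σ θ h φ φ' t‖) (Icc 0 T)) {n : ℕ}
    (hn : (n + 1) * h ≤ T) :
    ∫ s in n * h..(n + 1) * h, ‖φ' s‖ ≤
      L * (1 + (‖x₀‖ + ∫ s in (0 : ℝ)..n * h, ‖φ' s‖)) *
          (∫ s in n * h..(n + 1) * h, ‖thetaControl b σ θ h φ φ' s‖) +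
        L * h * (1 + (‖x₀‖ + ∫ s in (0 : ℝ)..(n + 1) * h, ‖φ' s‖)) := by
  set P := ‖x₀‖ + ∫ s in (0 : ℝ)..n * h, ‖φ' s‖
  set P' := ‖x₀‖ + ∫ s in (0 : ℝ)..(n + 1) * h, ‖φ' s‖
  have hn₀ : 0 ≤ n * h := by positivity
  have hcell : uIcc (n * h) ((n + 1) * h) ⊆ Icc 0 T := by
    rw [uIcc_of_le (by nlinarith)]
    exact Icc_subset_Icc hn₀ hn
  have hbound : ∀ s ∈ Ioo (n * h) ((n + 1) * h),
      ‖φ' s‖ ≤ L * (1 + P) * ‖thetaControl b σ θ h φ φ' s‖ + L * (1 + P') := by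
    intro s hs
    have hhat : gridHat h s = n * h := gridHat_eq_of_mem_Ico hh ⟨hs.1.le, hs.2⟩
    have hcheck : gridCheck h s ≤ (n + 1) * h := by
      exact_mod_cast gridCheck_le (n := n + 1) hh (by push_cast; exact hs.2.le)
    refine norm_le_of_thetaControl hb hσ hσu ?_
      (norm_thetaPoint_le hθ₀ hθ₁ hh hφ' hφ (hn₀.trans hs.1.le) hcheck hn)
    rw [hhat]
    exact norm_le_add_integral_norm hφ' hφ hn₀ le_rfl (by nlinarith)
  have hψcell := (hψ.mono_set hcell).intervalIntegrable.const_mul (L * (1 + P))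
  calc ∫ s in n * h..(n + 1) * h, ‖φ' s‖
      ≤ ∫ s in n * h..(n + 1) * h,
          (L * (1 + P) * ‖thetaControl b σ θ h φ φ' s‖ + L * (1 + P')) :=
        intervalIntegral.integral_mono_on_of_le_Ioo (by nlinarith)
          (IntegrableOn.mono_set hφ'.norm hcell).intervalIntegrable
          (hψcell.add intervalIntegrable_const) hbound
    _ = _ := by
        rw [intervalIntegral.integral_add hψcell intervalIntegrable_const,
          intervalIntegral.integral_const_mul, intervalIntegral.integral_const, smul_eq_mul]
        ring

theorem one_add_norm_add_integral_norm_le_exp (hb : ∀ x, ‖b x‖ ≤ L * (1 + ‖x‖))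
    (hσ : ∀ x, ‖σ x‖ ≤ L * (1 + ‖x‖)) (hσu : ∀ x, IsUnit (σ x)) (hθ₀ : 0 ≤ θ) (hθ₁ : θ ≤ 1)
    (hh : 0 < h) (hLh : L * h ≤ 1 / 2) {N : ℕ} (hNh : N * h = T)
    (hφ' : IntegrableOn φ' (Icc 0 T)) (hφ : ∀ t ∈ Icc 0 T, φ t = x₀ + ∫ s in (0 : ℝ)..t, φ' s)
    (hψ : IntegrableOn (fun t => ‖thetaControl b σ θ h φ φ' t‖) (Icc 0 T)) :
    1 + (‖x₀‖ + ∫ s in (0 : ℝ)..T, ‖φ' s‖) ≤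
      (1 + ‖x₀‖) * Real.exp (2 * L * (∫ s in (0 : ℝ)..T, ‖thetaControl b σ θ h φ φ' s‖) +
        2 * L * T) := by
  set u : ℕ → ℝ := fun n => 1 + (‖x₀‖ + ∫ s in (0 : ℝ)..n * h, ‖φ' s‖)
  set S : ℕ → ℝ := fun n => ∫ s in n * h..(n + 1) * h, ‖thetaControl b σ θ h φ φ' s‖
  have hS : ∀ n, 0 ≤ S n := fun n =>
    intervalIntegral.integral_nonneg (by nlinarith) fun _ _ => norm_nonneg _
  have hu : ∀ n, 0 ≤ u n := fun n => by
    have : 0 ≤ ∫ s in (0 : ℝ)..n * h, ‖φ' s‖ :=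
      intervalIntegral.integral_nonneg (by positivity) fun _ _ => norm_nonneg _
    positivity
  have hφ'n : IntegrableOn (fun s => ‖φ' s‖) (Icc 0 T) := hφ'.norm
  have hstep : ∀ n < N, u (n + 1) ≤ (1 + (2 * (L * S n) + 2 * (L * h))) * u n := by
    intro n hn
    have hnT : (n + 1) * h ≤ T := by
      rw [← hNh]; gcongr; exact_mod_cast hn
    refine le_one_add_mul_of_le_add_mul_self (mul_nonneg L.2 (hS n)) (by positivity) hLh
      (hu _) (hu _) ?_
    have hadd := intervalIntegral.integral_add_adjacent_intervals
      (hφ'n.intervalIntegrable_of_le (c := 0) (d := n * h) le_rfl (by positivity) (by nlinarith))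
      (hφ'n.intervalIntegrable_of_le (by positivity) (by nlinarith) hnT)
    have hcell := integral_norm_le_on_cell hb hσ hσu hθ₀ hθ₁ hh hφ' hφ hψ hnT
    simp only [u, S, Nat.cast_succ] at hadd hcell ⊢
    nlinarith
  have hsum :
      ∑ n ∈ Finset.range N, S n = ∫ s in (0 : ℝ)..T, ‖thetaControl b σ θ h φ φ' s‖ := by
    rw [← hNh]
    convert intervalIntegral.sum_integral_adjacent_intervals (a := fun n : ℕ => n * h)
      (n := N) fun k hk => hψ.intervalIntegrable_of_le (by positivity)
        (by push_cast; nlinarith) ?_ using 2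
    · simp [S]
    · simp
    · rw [← hNh]; gcongr; exact_mod_cast hk
  have := le_mul_exp_sum_of_le_one_add_mul (hu 0) (fun n _ => by positivity [hS n]) hstep
  simp only [u, Nat.cast_zero, zero_mul, intervalIntegral.integral_same, add_zero, hNh] at this
  refine this.trans (le_of_eq ?_)
  rw [Finset.sum_add_distrib, ← Finset.mul_sum, ← Finset.mul_sum, hsum]
  congr 2
  rw [Finset.sum_const, Finset.card_range, nsmul_eq_mul, ← hNh]
  ring

theorem integral_norm_sq_le (hb : ∀ x, ‖b x‖ ≤ L * (1 + ‖x‖))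
    (hσ : ∀ x, ‖σ x‖ ≤ L * (1 + ‖x‖)) (hσu : ∀ x, IsUnit (σ x)) (hθ₀ : 0 ≤ θ) (hθ₁ : θ ≤ 1)
    (hh : 0 < h) {N : ℕ} (hNh : N * h = T) (hφ' : IntegrableOn φ' (Icc 0 T))
    (hφ'₂ : IntegrableOn (fun t => ‖φ' t‖ ^ 2) (Icc 0 T))
    (hφ : ∀ t ∈ Icc 0 T, φ t = x₀ + ∫ s in (0 : ℝ)..t, φ' s)
    (hψ₂ : IntegrableOn (fun t => ‖thetaControl b σ θ h φ φ' t‖ ^ 2) (Icc 0 T)) :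
    ∫ t in (0 : ℝ)..T, ‖φ' t‖ ^ 2 ≤
      (L * (1 + (‖x₀‖ + ∫ s in (0 : ℝ)..T, ‖φ' s‖))) ^ 2 *
        (2 * ((∫ t in (0 : ℝ)..T, ‖thetaControl b σ θ h φ φ' t‖ ^ 2) + T)) := by
  have hT : 0 ≤ T := hNh ▸ by positivity
  set C := L * (1 + (‖x₀‖ + ∫ s in (0 : ℝ)..T, ‖φ' s‖))
  have hpoint : ∀ t ∈ Icc 0 T,
      ‖φ' t‖ ^ 2 ≤ C ^ 2 * (2 * ‖thetaControl b σ θ h φ φ' t‖ ^ 2 + 2) := by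
    intro t ht
    have hcheck : gridCheck h t ≤ T := hNh ▸ gridCheck_le hh (hNh ▸ ht.2)
    have := norm_le_of_thetaControl (φ' := φ') hb hσ hσu
      (norm_le_add_integral_norm hφ' hφ (gridHat_nonneg hh.le ht.1)
        ((gridHat_le hh t).trans ht.2) le_rfl)
      (norm_thetaPoint_le hθ₀ hθ₁ hh hφ' hφ ht.1 hcheck le_rfl)
    nlinarith [sq_nonneg (‖thetaControl b σ θ h φ φ' t‖ - 1), norm_nonneg (φ' t),
      norm_nonneg (thetaControl b σ θ h φ φ' t)]
  have hψ₂' := (hψ₂.intervalIntegrable_of_le le_rfl hT le_rfl).const_mul 2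
  calc ∫ t in (0 : ℝ)..T, ‖φ' t‖ ^ 2
      ≤ ∫ t in (0 : ℝ)..T, C ^ 2 * (2 * ‖thetaControl b σ θ h φ φ' t‖ ^ 2 + 2) :=
        intervalIntegral.integral_mono_on hT (hφ'₂.intervalIntegrable_of_le le_rfl hT le_rfl)
          ((hψ₂'.add intervalIntegrable_const).const_mul _) hpoint
    _ = _ := by
        rw [intervalIntegral.integral_const_mul, intervalIntegral.integral_add hψ₂'
          intervalIntegrable_const, intervalIntegral.integral_const_mul,
          intervalIntegral.integral_const, smul_eq_mul, sub_zero]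
        ring

theorem sqrt_integral_norm_sq_le (hb : ∀ x, ‖b x‖ ≤ L * (1 + ‖x‖))
    (hσ : ∀ x, ‖σ x‖ ≤ L * (1 + ‖x‖)) (hσu : ∀ x, IsUnit (σ x)) (hθ₀ : 0 ≤ θ) (hθ₁ : θ ≤ 1)
    (hh : 0 < h) (hLh : L * h ≤ 1 / 2) {N : ℕ} (hNh : N * h = T)
    (hφ' : IntegrableOn φ' (Icc 0 T)) (hφ'₂ : IntegrableOn (fun t => ‖φ' t‖ ^ 2) (Icc 0 T))
    (hφ : ∀ t ∈ Icc 0 T, φ t = x₀ + ∫ s in (0 : ℝ)..t, φ' s) :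
    √(∫ t in (0 : ℝ)..T, ‖φ' t‖ ^ 2) ≤
      L * (1 + ‖x₀‖) * Real.exp ((3 * L + 1) * T) * Real.exp ((2 * L + 2) *
        ((1 / 2) * ∫ t in (0 : ℝ)..T, ‖thetaControl b σ θ h φ φ' t‖ ^ 2)) := by
  have hT : 0 ≤ T := hNh ▸ by positivity
  have hψL2 := memLp_thetaControl (σ := σ) hb hθ₀ hθ₁ hh hNh hφ' hφ'₂ hφ
  have hψ₂ : IntegrableOn (fun t => ‖thetaControl b σ θ h φ φ' t‖ ^ 2) (Icc 0 T) :=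
    hψL2.integrable_norm_pow two_ne_zero
  have hψ : IntegrableOn (fun t => ‖thetaControl b σ θ h φ φ' t‖) (Icc 0 T) :=
    (hψL2.integrable one_le_two).norm
  have hU := one_add_norm_add_integral_norm_le_exp hb hσ hσu hθ₀ hθ₁ hh hLh hNh hφ' hφ hψ
  have hG := intervalIntegral.integral_le_integral_sq_add_div_two hT
    (hψ.intervalIntegrable_of_le le_rfl hT le_rfl) (hψ₂.intervalIntegrable_of_le le_rfl hT le_rfl)
  have hI := integral_norm_sq_le hb hσ hσu hθ₀ hθ₁ hh hNh hφ' hφ'₂ hφ hψ₂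
  set Q := ∫ t in (0 : ℝ)..T, ‖thetaControl b σ θ h φ φ' t‖ ^ 2
  set U := 1 + (‖x₀‖ + ∫ s in (0 : ℝ)..T, ‖φ' s‖)
  have hQ : 0 ≤ Q := intervalIntegral.integral_nonneg hT fun _ _ => by positivity
  have hU₀ : 0 ≤ U := by
    have : 0 ≤ ∫ s in (0 : ℝ)..T, ‖φ' s‖ :=
      intervalIntegral.integral_nonneg hT fun _ _ => norm_nonneg _
    positivity
  calc √(∫ t in (0 : ℝ)..T, ‖φ' t‖ ^ 2)
      ≤ √((L * U) ^ 2 * (2 * (Q + T))) := Real.sqrt_le_sqrt hI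
    _ = L * U * √(2 * (Q + T)) := by
        rw [Real.sqrt_mul (sq_nonneg _), Real.sqrt_sq (by positivity)]
    _ ≤ L * ((1 + ‖x₀‖) * Real.exp (L * (Q + T) + 2 * L * T)) * Real.exp (Q + T) := by
        gcongr
        · exact hU.trans (mul_le_mul_of_nonneg_left (Real.exp_le_exp.2 (by nlinarith [L.2]))
            (by positivity))
        · simpa using Real.sqrt_le_exp_half (x := 2 * (Q + T)) (by positivity)
    _ = L * (1 + ‖x₀‖) * Real.exp ((3 * L + 1) * T) * Real.exp ((2 * L + 2) * ((1 / 2) * Q)) := by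
        rw [mul_assoc, mul_assoc, ← Real.exp_add, mul_assoc _ (Real.exp _), ← Real.exp_add]
        ring_nf

end ThetaMethod

theorem H1_norm_bounded_by_Bh_general
    (d : ℕ) (T : ℝ) (hT : 0 < T)
    (x₀ : EuclideanSpace ℝ (Fin d)) (L : NNReal) :
    ∃ C₀ : ℝ, 0 < C₀ ∧
      ∀ θ : ℝ, 0 ≤ θ → θ ≤ 1 →
      ∀ (b : EuclideanSpace ℝ (Fin d) → EuclideanSpace ℝ (Fin d))
        (σ : EuclideanSpace ℝ (Fin d) →
          (EuclideanSpace ℝ (Fin d) →L[ℝ] EuclideanSpace ℝ (Fin d))),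
        LipschitzWith L b → LipschitzWith L σ → ‖b 0‖ + ‖σ 0‖ ≤ (L : ℝ) →
        (∀ x, IsUnit (σ x)) →
        ∀ N : ℕ, 0 < N → T / (N : ℝ) ≤ 1 / (2 * (L : ℝ)) →
        ∀ φ φ' : ℝ → EuclideanSpace ℝ (Fin d),
          IntegrableOn φ' (Icc 0 T) →
          IntegrableOn (fun t => ‖φ' t‖ ^ 2) (Icc 0 T) →
          (∀ t ∈ Icc (0 : ℝ) T, φ t = x₀ + ∫ s in (0 : ℝ)..t, φ' s) →
          Real.sqrt (∫ t in (0 : ℝ)..T, ‖φ' t‖ ^ 2) ≤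
            C₀ * Real.exp (C₀ * ((1 / 2) * ∫ t in (0 : ℝ)..T,
              ‖(Ring.inverse (σ (φ (gridHat (T / (N : ℝ)) t))))
                (φ' t - b ((1 - θ) • φ (gridHat (T / (N : ℝ)) t)
                  + θ • φ (gridCheck (T / (N : ℝ)) t)))‖ ^ 2)) := by
  set A := L * (1 + ‖x₀‖) * Real.exp ((3 * L + 1) * T)
  refine ⟨A + (2 * L + 2), by positivity, ?_⟩
  intro θ hθ₀ hθ₁ b σ hb hσ hbσ hσu N hN hTN φ φ' hφ' hφ'₂ hφ
  have hNpos : (0 : ℝ) < N := Nat.cast_pos.2 hN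
  have hLh : L * (T / N) ≤ 1 / 2 :=
    calc L * (T / N) ≤ L * (1 / (2 * L)) := by gcongr
      _ = 1 / 2 * (L / L) := by ring
      _ ≤ 1 / 2 := mul_le_of_le_one_right (by norm_num) (div_self_le_one _)
  have hB : 0 ≤ (1 / 2) * ∫ t in (0 : ℝ)..T, ‖thetaControl b σ θ (T / N) φ φ' t‖ ^ 2 :=
    mul_nonneg (by norm_num) (intervalIntegral.integral_nonneg hT.le fun _ _ => by positivity)
  refine (sqrt_integral_norm_sq_le
    (hb.norm_le_mul_one_add_norm ((le_add_of_nonneg_right (norm_nonneg _)).trans hbσ))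
    (hσ.norm_le_mul_one_add_norm ((le_add_of_nonneg_left (norm_nonneg _)).trans hbσ))
    hσu hθ₀ hθ₁ (div_pos hT hNpos) hLh (mul_div_cancel₀ T hNpos.ne') hφ' hφ'₂ hφ).trans ?_
  have hA : 0 ≤ A := by positivity
  exact mul_le_mul (le_add_of_nonneg_right (by positivity))
    (Real.exp_le_exp.2 (mul_le_mul_of_nonneg_right (le_add_of_nonneg_left hA) hB))
    (Real.exp_nonneg _) (by positivity)

/-- For the discrete functional
`B_h(φ) = ½∫₀ᵀ |σ(φ(t̂))⁻¹ (φ'(t) − b((1−θ)φ(t̂) + θφ(ť)))|² dt` associated with the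
stochastic θ-method on the uniform grid of step `h = T/N`, there is `C₀ > 0` depending
only on `x₀`, `T`, `L` (in particular independent of `h`) such that
`‖φ‖_{H¹} ≤ C₀ e^{C₀ B_h(φ)}` for all `φ ∈ H¹_{x₀}(0,T;ℝ^d)` and all `h ∈ (0, 1/(2L)]`. -/
theorem H1_norm_bounded_by_Bh
    (d : ℕ) (hd : 1 ≤ d) (T : ℝ) (hT : 0 < T)
    (x₀ : EuclideanSpace ℝ (Fin d)) (L : NNReal) (hL : 0 < L) :
    ∃ C₀ : ℝ, 0 < C₀ ∧
      ∀ θ : ℝ, 0 ≤ θ → θ ≤ 1 →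
      ∀ (b : EuclideanSpace ℝ (Fin d) → EuclideanSpace ℝ (Fin d))
        (σ : EuclideanSpace ℝ (Fin d) →
          (EuclideanSpace ℝ (Fin d) →L[ℝ] EuclideanSpace ℝ (Fin d))),
        LipschitzWith L b → LipschitzWith L σ → ‖b 0‖ + ‖σ 0‖ ≤ (L : ℝ) →
        (∀ x, IsUnit (σ x)) →
        ∀ N : ℕ, 0 < N → T / (N : ℝ) ≤ 1 / (2 * (L : ℝ)) →
        ∀ φ φ' : ℝ → EuclideanSpace ℝ (Fin d),
          IntegrableOn φ' (Icc 0 T) →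
          IntegrableOn (fun t => ‖φ' t‖ ^ 2) (Icc 0 T) →
          (∀ t ∈ Icc (0 : ℝ) T, φ t = x₀ + ∫ s in (0 : ℝ)..t, φ' s) →
          Real.sqrt (∫ t in (0 : ℝ)..T, ‖φ' t‖ ^ 2) ≤
            C₀ * Real.exp (C₀ * ((1 / 2) * ∫ t in (0 : ℝ)..T,
              ‖(Ring.inverse (σ (φ (gridHat (T / (N : ℝ)) t))))
                (φ' t - b ((1 - θ) • φ (gridHat (T / (N : ℝ)) t)
                  + θ • φ (gridCheck (T / (N : ℝ)) t)))‖ ^ 2)) :=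
  H1_norm_bounded_by_Bh_general d T hT x₀ L
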